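/- arXiv:1405.0161 — 3 statements merged into one kernel-verified Lean document; each statement's English description precedes it below -/
import Mathlib

section
/- The set of ratios {φ(n)/n : n ∈ ℕ, n ≥ 1} is dense in the interval (0, 1): for every real α in (0,1) and every ε > 0 there exists a positive integer n with |α − φ(n)/n| < ε. -/
open Finset Filter

private lemma totient_key (α ε : ℝ) (hα0 : 0 < α) (hα1 : α < 1) (hε : 0 < ε) (M : ℕ)
    (hM1 : 1 ≤ M) (hMε : 1 ≤ (M : ℝ) * ε) :
    ∃ S : Finset ℕ, (∀ p ∈ S, p.Prime ∧ M < p) ∧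
      α ≤ ∏ p ∈ S, (1 - (p : ℝ)⁻¹) ∧ ∏ p ∈ S, (1 - (p : ℝ)⁻¹) < α + ε := by
  by_contra hcon
  push_neg at hcon
  -- hcon : ∀ S, (∀ p ∈ S, Prime p ∧ M < p) → α ≤ ∏ → α + ε ≤ ∏
  set F : ℕ → ℝ := fun i => if Nat.Prime i then 1 - (i : ℝ)⁻¹ else 1 with hF
  set f : ℕ → ℝ := Set.indicator {p | Nat.Prime p} (fun n : ℕ => (1 : ℝ) / n) with hf
  have hf_nonneg : ∀ i, 0 ≤ f i := by
    intro i
    simp only [hf, Set.indicator]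
    split <;> positivity
  have hFnonneg : ∀ i, 1 ≤ i → 0 ≤ F i := by
    intro i hi
    simp only [hF]
    split
    · have : (i : ℝ)⁻¹ ≤ 1 := by
        rw [inv_le_one_iff₀]; right; exact_mod_cast hi
      linarith
    · norm_num
  have hFle1 : ∀ i, F i ≤ 1 := by
    intro i
    simp only [hF]
    split
    · have : 0 ≤ (i : ℝ)⁻¹ := by positivity
      linarith
    · exact le_rfl
  have hFexp : ∀ i, 1 ≤ i → F i ≤ Real.exp (-(f i)) := by
    intro i _
    simp only [hF, hf, Set.indicator]
    by_cases h : Nat.Prime i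
    · simp only [h, if_true, Set.mem_setOf_eq]
      rw [one_div]
      have := Real.add_one_le_exp (-(i : ℝ)⁻¹)
      linarith
    · simp only [h, if_false, Set.mem_setOf_eq, neg_zero, Real.exp_zero]
      exact le_rfl
  set Q : ℕ → ℝ := fun n => ∏ i ∈ Finset.Ico (M + 1) n, F i with hQ
  have hQfilter : ∀ n, Q n = ∏ p ∈ (Finset.Ico (M + 1) n).filter Nat.Prime, (1 - (p : ℝ)⁻¹) := by
    intro n
    rw [Finset.prod_filter]
  have hmemIco : ∀ {i n : ℕ}, i ∈ Finset.Ico (M + 1) n → 1 ≤ i := by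
    intro i n hi
    have := (Finset.mem_Ico.mp hi).1
    omega
  have hQ1 : ∀ n, Q n ≤ 1 := by
    intro n
    apply Finset.prod_le_one
    · intro i hi; exact hFnonneg i (hmemIco hi)
    · intro i _; exact hFle1 i
  have hQvalid : ∀ n, α ≤ Q n → α + ε ≤ Q n := by
    intro n hn
    rw [hQfilter] at hn ⊢
    apply hcon
    · intro p hp
      simp only [Finset.mem_filter, Finset.mem_Ico] at hp
      exact ⟨hp.2, Nat.lt_of_succ_le hp.1.1⟩
    · exact hn
  have hmain : ∀ n, α + ε ≤ Q n := by
    intro n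
    induction n with
    | zero =>
      apply hQvalid
      simp only [hQ]
      rw [Finset.Ico_eq_empty (by omega), Finset.prod_empty]
      linarith
    | succ n ih =>
      rcases le_or_gt (n + 1) (M + 1) with h | h
      · apply hQvalid
        simp only [hQ]
        rw [Finset.Ico_eq_empty (by omega), Finset.prod_empty]
        linarith
      · have hMn : M + 1 ≤ n := by omega
        have hstep : Q (n + 1) = Q n * F n := by
          simp only [hQ]
          exact Finset.prod_Ico_succ_top hMn F
        by_cases hp : Nat.Prime n
        · have hninv : (n : ℝ)⁻¹ ≤ ε := by
            have hMpos : (0 : ℝ) < M := by exact_mod_cast hM1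
            have hnM : (M : ℝ) ≤ n := by exact_mod_cast (by omega : M ≤ n)
            have h1 : (n : ℝ)⁻¹ ≤ (M : ℝ)⁻¹ := by
              apply inv_anti₀ hMpos hnM
            have h2 : (M : ℝ)⁻¹ ≤ ε := by
              rw [inv_le_iff_one_le_mul₀ hMpos]
              linarith [hMε]
            linarith
          have hninv0 : (0 : ℝ) ≤ (n : ℝ)⁻¹ := by positivity
          have hFn : F n = 1 - (n : ℝ)⁻¹ := by simp only [hF, if_pos hp]
          have hQn1 : Q n ≤ 1 := hQ1 n
          have hα' : α ≤ Q (n + 1) := by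
            rw [hstep, hFn]
            nlinarith [ih, hQn1, hninv, hninv0]
          exact hQvalid _ hα'
        · have hFn : F n = 1 := by simp only [hF, if_neg hp]
          rw [hstep, hFn, mul_one]
          exact ih
  -- Now the contradiction: Q n ≤ exp(-(tail sum)) → 0
  have hQexp : ∀ n, Q n ≤ Real.exp (-(∑ i ∈ Finset.Ico (M + 1) n, f i)) := by
    intro n
    have : Q n ≤ ∏ i ∈ Finset.Ico (M + 1) n, Real.exp (-(f i)) := by
      apply Finset.prod_le_prod
      · intro i hi; exact hFnonneg i (hmemIco hi)
      · intro i hi; exact hFexp i (hmemIco hi)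
    rwa [← Real.exp_sum, Finset.sum_neg_distrib] at this
  have hsum : Tendsto (fun n => ∑ i ∈ Finset.range n, f i) atTop atTop := by
    rw [← not_summable_iff_tendsto_nat_atTop_of_nonneg hf_nonneg]
    exact not_summable_one_div_on_primes
  have htail : Tendsto (fun n => ∑ i ∈ Finset.Ico (M + 1) n, f i) atTop atTop := by
    have h1 : Tendsto (fun n => (∑ i ∈ Finset.range n, f i) - ∑ i ∈ Finset.range (M + 1), f i)
        atTop atTop := tendsto_atTop_add_const_right atTop _ hsum
    apply h1.congr'
    filter_upwards [eventually_ge_atTop (M + 1)] with n hn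
    rw [Finset.sum_Ico_eq_sub f hn]
  have hexp0 : Tendsto (fun n => Real.exp (-(∑ i ∈ Finset.Ico (M + 1) n, f i))) atTop (nhds 0) :=
    Real.tendsto_exp_neg_atTop_nhds_zero.comp htail
  have hev := hexp0.eventually_lt_const (by linarith : (0 : ℝ) < α + ε)
  obtain ⟨n, hn⟩ := hev.exists
  exact absurd (le_trans (hmain n) (hQexp n)) (not_le.mpr hn)

/-- The set of ratios `φ(n)/n` is dense in `(0, 1)`. -/
theorem totient_ratio_dense (α : ℝ) (hα : α ∈ Set.Ioo (0 : ℝ) 1) (ε : ℝ) (hε : 0 < ε) :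
    ∃ n : ℕ, 0 < n ∧ |α - (Nat.totient n : ℝ) / n| < ε := by
  obtain ⟨hα0, hα1⟩ := hα
  obtain ⟨M, hM⟩ := exists_nat_gt (max 1 (1 / ε))
  have hM1 : 1 ≤ M := by
    have : (1 : ℝ) < M := lt_of_le_of_lt (le_max_left _ _) hM
    exact_mod_cast this.le
  have hMε : 1 ≤ (M : ℝ) * ε := by
    have h1 : 1 / ε < M := lt_of_le_of_lt (le_max_right _ _) hM
    rw [div_lt_iff₀ hε] at h1
    linarith
  obtain ⟨S, hS, h1, h2⟩ := totient_key α ε hα0 hα1 hε M hM1 hMε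
  set n : ℕ := ∏ p ∈ S, p with hn
  have hprimes : ∀ p ∈ S, p.Prime := fun p hp => (hS p hp).1
  have hnpos : 0 < n := Finset.prod_pos fun p hp => (hprimes p hp).pos
  have hpf : n.primeFactors = S := Nat.primeFactors_prod hprimes
  have htot : (Nat.totient n : ℚ) = (n : ℚ) * ∏ p ∈ S, (1 - (p : ℚ)⁻¹) := by
    rw [← hpf]
    exact Nat.totient_eq_mul_prod_factors n
  have htotR : (Nat.totient n : ℝ) = (n : ℝ) * ∏ p ∈ S, (1 - (p : ℝ)⁻¹) := by
    have := congrArg (fun q : ℚ => (q : ℝ)) htot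
    push_cast at this
    exact_mod_cast this
  have hne : (n : ℝ) ≠ 0 := by positivity
  have hdiv : (Nat.totient n : ℝ) / n = ∏ p ∈ S, (1 - (p : ℝ)⁻¹) := by
    rw [htotR, mul_comm, mul_div_assoc, div_self hne, mul_one]
  refine ⟨n, hnpos, ?_⟩
  rw [hdiv, abs_sub_lt_iff]
  constructor <;> linarith
end

section
/- Let x ≥ 1 be a large real number. Then Σ_{n≤x} φ(n)·{x/n} = (6/π² − 1/2)·x² + O(x log x), where {y} denotes the fractional part of y. -/
/-!
With `N = ⌊x⌋` we have `⌊x/n⌋ = ⌊N/n⌋`, so the sum is `x · Σ_{n≤N} φ(n)/n − Σ_{n≤N} φ(n)⌊N/n⌋`.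
The second sum is `N(N+1)/2` (Sylvester: sum `Σ_{d∣m} φ(d) = m` over `m ≤ N`). Since
`φ(n)/n = Σ_{d∣n} μ(d)/d`, the first is `Σ_{d≤N} μ(d)/d · ⌊N/d⌋ = N Σ_{d≤N} μ(d)/d² + O(log N)`,
and `Σ_d μ(d)/d² = 1/ζ(2) = 6/π²` with a tail `O(1/N)`.
-/

open Filter Real Finset Asymptotics
open scoped Nat ArithmeticFunction.Moebius

theorem sum_Ioc_sum_divisors_eq_sum_mul_div {R : Type*} [Semiring R] (f : ℕ → R) (N : ℕ) :
    ∑ n ∈ Ioc 0 N, ∑ d ∈ n.divisors, f d = ∑ d ∈ Ioc 0 N, f d * (N / d : ℕ) := by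
  let F : ArithmeticFunction R := ⟨fun n => if n = 0 then 0 else f n, if_pos rfl⟩
  convert ArithmeticFunction.sum_Ioc_mul_zeta_eq_sum F N using 1 <;>
    refine sum_congr rfl fun n hn => ?_
  · rw [ArithmeticFunction.coe_mul_zeta_apply]
    exact sum_congr rfl fun d hd => (if_neg (Nat.pos_of_mem_divisors hd).ne').symm
  · exact congrArg (· * _) (if_neg (mem_Ioc.1 hn).1.ne').symm

theorem sum_Ioc_natCast (N : ℕ) : ∑ n ∈ Ioc 0 N, (n : ℝ) = N * (N + 1) / 2 := by
  induction N with
  | zero => simp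
  | succ N ih => rw [sum_Ioc_succ_top N.zero_le, ih]; push_cast; ring

theorem sum_Ioc_totient_mul_div (N : ℕ) :
    ∑ n ∈ Ioc 0 N, (φ n : ℝ) * (N / n : ℕ) = N * (N + 1) / 2 := by
  rw [← sum_Ioc_sum_divisors_eq_sum_mul_div, ← sum_Ioc_natCast]
  exact sum_congr rfl fun n _ => mod_cast Nat.sum_totient n

theorem totient_div_eq_sum_moebius_div {n : ℕ} (hn : 0 < n) :
    (φ n : ℝ) / n = ∑ d ∈ n.divisors, (μ d : ℝ) / d := by
  have hφ : ∑ x ∈ n.divisorsAntidiagonal, (μ x.1 : ℝ) * x.2 = φ n :=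
    (ArithmeticFunction.sum_eq_iff_sum_mul_moebius_eq (f := fun m => (φ m : ℝ))
      (g := fun m => (m : ℝ))).1 (fun m _ => mod_cast Nat.sum_totient m) n hn
  rw [← hφ, Nat.sum_divisorsAntidiagonal (fun a b => (μ a : ℝ) * b), sum_div]
  refine sum_congr rfl fun d hd => ?_
  have hd0 : (d : ℝ) ≠ 0 := by exact_mod_cast (Nat.pos_of_mem_divisors hd).ne'
  rw [Nat.cast_div (Nat.dvd_of_mem_divisors hd) hd0]
  field_simp

theorem sum_Ioc_totient_div (N : ℕ) :
    ∑ n ∈ Ioc 0 N, (φ n : ℝ) / n = ∑ d ∈ Ioc 0 N, (μ d : ℝ) / d * (N / d : ℕ) := by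
  rw [← sum_Ioc_sum_divisors_eq_sum_mul_div]
  exact sum_congr rfl fun n hn => totient_div_eq_sum_moebius_div (mem_Ioc.1 hn).1

theorem natCast_floor_div_eq_sub_fract {K : Type*} [Field K] [LinearOrder K]
    [IsStrictOrderedRing K] [FloorRing K] {y : K} (hy : 0 ≤ y) (n : ℕ) :
    ((⌊y⌋₊ / n : ℕ) : K) = y / n - Int.fract (y / n) := by
  rw [← Nat.floor_div_natCast, natCast_floor_eq_intCast_floor (by positivity), Int.self_sub_fract]

theorem abs_moebius_div_pow_le (d k : ℕ) : |(μ d : ℝ) / d ^ k| ≤ 1 / d ^ k := by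
  rw [abs_div, abs_pow, Nat.abs_cast]
  gcongr
  exact_mod_cast ArithmeticFunction.abs_moebius_le_one

theorem summable_moebius_div_sq : Summable fun d : ℕ => (μ d : ℝ) / d ^ 2 :=
  .of_norm_bounded (Real.summable_one_div_nat_pow.2 one_lt_two) fun d => abs_moebius_div_pow_le d 2

theorem tsum_moebius_div_sq : ∑' d : ℕ, (μ d : ℝ) / d ^ 2 = 6 / π ^ 2 := by
  have hs : 1 < (2 : ℂ).re := by norm_num
  have hL : LSeries (fun n => (μ n : ℂ)) 2 = 6 / (π : ℂ) ^ 2 := by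
    have h := ArithmeticFunction.LSeries_zeta_mul_Lseries_moebius hs
    rw [ArithmeticFunction.LSeries_zeta_eq_riemannZeta hs, riemannZeta_two] at h
    have hπ : (π : ℂ) ≠ 0 := Complex.ofReal_ne_zero.2 pi_ne_zero
    field_simp at h ⊢
    linear_combination h
  apply Complex.ofReal_injective
  rw [Complex.ofReal_tsum]
  push_cast
  rw [← hL, LSeries]
  refine tsum_congr fun d => ?_
  rcases eq_or_ne d 0 with rfl | hd
  · simp
  · rw [LSeries.term_of_ne_zero hd, Complex.cpow_ofNat]

theorem abs_tsum_moebius_div_sq_sub_sum_le (N : ℕ) :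
    |∑' d : ℕ, (μ d : ℝ) / d ^ 2 - ∑ d ∈ Ioc 0 N, (μ d : ℝ) / d ^ 2| ≤ 2 / (N + 1) := by
  set f : ℕ → ℝ := fun d => (μ d : ℝ) / d ^ 2
  have hhead : ∑ d ∈ range (N + 1), f d = ∑ d ∈ Ioc 0 N, f d := by
    rw [range_eq_Ico, sum_eq_sum_Ico_succ_bot N.succ_pos, Nat.succ_eq_add_one,
      Ico_add_one_add_one_eq_Ioc]
    simp [f]
  have htail : Summable fun i => ‖f (i + (N + 1))‖ :=
    ((summable_nat_add_iff (N + 1)).2 summable_moebius_div_sq).norm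
  rw [← summable_moebius_div_sq.sum_add_tsum_nat_add (N + 1), hhead, add_sub_cancel_left,
    ← Real.norm_eq_abs]
  have hpartial : ∀ m, ∑ i ∈ range m, ‖f (i + (N + 1))‖ ≤ 2 / (N + 1) := fun m =>
    calc ∑ i ∈ range m, ‖f (i + (N + 1))‖ ≤ ∑ i ∈ range m, 1 / ((i + (N + 1) : ℕ) : ℝ) ^ 2 :=
          sum_le_sum fun i _ => abs_moebius_div_pow_le _ 2
      _ = ∑ i ∈ Ioo N (m + (N + 1)), ((i : ℝ) ^ 2)⁻¹ := by
          rw [range_eq_Ico, sum_Ico_add' (fun i : ℕ => 1 / (i : ℝ) ^ 2), zero_add,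
            Ico_add_one_left_eq_Ioo]
          simp only [one_div]
      _ ≤ 2 / (N + 1) := by exact_mod_cast sum_Ioo_inv_sq_le (α := ℝ) N _
  exact (norm_tsum_le_tsum_norm htail).trans
    (Real.tsum_le_of_sum_range_le (fun _ => norm_nonneg _) hpartial)

theorem abs_sum_moebius_div_mul_fract_le (N : ℕ) (y : ℕ → ℝ) :
    |∑ d ∈ Ioc 0 N, (μ d : ℝ) / d * Int.fract (y d)| ≤ 1 + log N := by
  calc |∑ d ∈ Ioc 0 N, (μ d : ℝ) / d * Int.fract (y d)| ≤ ∑ d ∈ Ioc 0 N, (1 : ℝ) / d := by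
        refine (abs_sum_le_sum_abs _ _).trans (sum_le_sum fun d _ => ?_)
        rw [abs_mul, abs_of_nonneg (Int.fract_nonneg (y d))]
        simpa using mul_le_mul (abs_moebius_div_pow_le d 1) (Int.fract_lt_one (y d)).le
          (Int.fract_nonneg _) (by positivity)
    _ = harmonic N := by
        rw [harmonic_eq_sum_Icc, ← Icc_add_one_left_eq_Ioc, zero_add]
        push_cast
        simp only [one_div]
    _ ≤ 1 + log N := harmonic_le_one_add_log N

theorem abs_sum_totient_div_sub_le (N : ℕ) :
    |∑ n ∈ Ioc 0 N, (φ n : ℝ) / n - 6 / π ^ 2 * N| ≤ 3 + log N := by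
  set P := ∑ d ∈ Ioc 0 N, (μ d : ℝ) / d ^ 2
  set R := ∑ d ∈ Ioc 0 N, (μ d : ℝ) / d * Int.fract ((N : ℝ) / d)
  have hsplit : ∑ n ∈ Ioc 0 N, (φ n : ℝ) / n = N * P - R := by
    rw [sum_Ioc_totient_div, mul_sum, ← sum_sub_distrib]
    refine sum_congr rfl fun d _ => ?_
    rw [← Nat.floor_natCast (R := ℝ) N, natCast_floor_div_eq_sub_fract N.cast_nonneg,
      Nat.floor_natCast]
    ring
  have hP : (N : ℝ) * |6 / π ^ 2 - P| ≤ 2 := by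
    rw [← tsum_moebius_div_sq]
    calc (N : ℝ) * |∑' d : ℕ, (μ d : ℝ) / d ^ 2 - P| ≤ N * (2 / (N + 1)) :=
          mul_le_mul_of_nonneg_left (abs_tsum_moebius_div_sq_sub_sum_le N) N.cast_nonneg
      _ ≤ 2 := by
          rw [mul_div_left_comm]
          exact mul_le_of_le_one_right zero_le_two ((div_le_one (by positivity)).2 (by linarith))
  have hR := abs_sum_moebius_div_mul_fract_le N fun d => (N : ℝ) / d
  calc |∑ n ∈ Ioc 0 N, (φ n : ℝ) / n - 6 / π ^ 2 * N| = |N * (P - 6 / π ^ 2) - R| := by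
        rw [hsplit]; ring_nf
    _ ≤ |N * (P - 6 / π ^ 2)| + |R| := abs_sub _ _
    _ = N * |6 / π ^ 2 - P| + |R| := by rw [abs_mul, Nat.abs_cast, abs_sub_comm]
    _ ≤ 3 + log N := by linarith

theorem sum_totient_mul_fract_eq {x : ℝ} (hx : 0 ≤ x) :
    ∑ n ∈ Ioc 0 ⌊x⌋₊, (φ n : ℝ) * Int.fract (x / n) =
      x * ∑ n ∈ Ioc 0 ⌊x⌋₊, (φ n : ℝ) / n - ⌊x⌋₊ * (⌊x⌋₊ + 1) / 2 := by
  rw [← sum_Ioc_totient_mul_div, mul_sum, ← sum_sub_distrib]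
  refine sum_congr rfl fun n _ => ?_
  rw [natCast_floor_div_eq_sub_fract hx]
  ring

theorem abs_sum_totient_mul_fract_sub_le {x : ℝ} (hx : 1 ≤ x) :
    |∑ n ∈ Icc 1 ⌊x⌋₊, (φ n : ℝ) * Int.fract (x / n) - (6 / π ^ 2 - 1 / 2) * x ^ 2| ≤
      x * (log x + 5) := by
  set N := ⌊x⌋₊
  set A := ∑ n ∈ Ioc 0 N, (φ n : ℝ) / n
  set K := 6 / π ^ 2
  have hK : K ≤ 1 := by
    rw [div_le_one (by positivity)]; nlinarith [pi_gt_three]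
  have hNx : (N : ℝ) ≤ x := Nat.floor_le (by linarith)
  have hxN : x < N + 1 := Nat.lt_floor_add_one x
  have hA : x * |A - K * N| ≤ x * (3 + log x) := by
    have hlog := log_le_log (Nat.cast_pos.2 (Nat.floor_pos.2 hx)) hNx
    have := abs_sum_totient_div_sub_le N
    gcongr
    linarith
  rw [show Icc 1 N = Ioc 0 N from Icc_add_one_left_eq_Ioc 0 N,
    sum_totient_mul_fract_eq (by linarith)]
  have hrest : |K * x * (N - x) + (x ^ 2 - N ^ 2 - N) / 2| ≤ 2 * x := by
    have hKx : 0 ≤ K * x := by positivity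
    rw [abs_le]; constructor
    · nlinarith [mul_le_mul_of_nonneg_left (by linarith : x - N ≤ 1) hKx]
    · nlinarith [mul_nonneg hKx (sub_nonneg.2 hNx)]
  calc |x * A - N * (N + 1) / 2 - (K - 1 / 2) * x ^ 2|
      = |x * (A - K * N) + (K * x * (N - x) + (x ^ 2 - N ^ 2 - N) / 2)| := by ring_nf
    _ ≤ |x * (A - K * N)| + |K * x * (N - x) + (x ^ 2 - N ^ 2 - N) / 2| := abs_add_le _ _
    _ = x * |A - K * N| + |K * x * (N - x) + (x ^ 2 - N ^ 2 - N) / 2| := by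
        rw [abs_mul, abs_of_nonneg (by linarith : 0 ≤ x)]
    _ ≤ x * (3 + log x) + 2 * x := add_le_add hA hrest
    _ = x * (log x + 5) := by ring

/-- `Σ_{n ≤ x} φ(n)·{x/n} = (6/π² − 1/2)·x² + O(x log x)`. -/
theorem sum_totient_fract :
    (fun x : ℝ =>
        (∑ n ∈ Finset.Icc 1 ⌊x⌋₊, (Nat.totient n : ℝ) * Int.fract (x / n)) -
          (6 / Real.pi ^ 2 - 1 / 2) * x ^ 2) =O[atTop]
      (fun x : ℝ => x * Real.log x) := by
  have hlog : (fun x => log x + 5) =O[atTop] log :=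
    (isBigO_refl _ _).add isLittleO_const_log_atTop.isBigO
  refine (IsBigO.of_bound 1 ?_).trans ((isBigO_refl (fun x => x) _).mul hlog)
  filter_upwards [eventually_ge_atTop 1] with x hx
  have hbound : 0 ≤ x * (log x + 5) := mul_nonneg (by linarith) (by linarith [log_nonneg hx])
  rw [Real.norm_eq_abs, Real.norm_eq_abs, one_mul, abs_of_nonneg hbound]
  exact abs_sum_totient_mul_fract_sub_le hx
end

section
/- Let x ≥ 2. Then Σ_{n ≤ x} φ(λ(n))/λ(n) ≫ x / log log x, where φ is Euler's totient and λ is the Carmichael function. -/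
/-!
Since `λ(n) ∣ φ(n)`, every term is `φ(m)/m` for some `m ≤ x`, and
`φ(m)/m = ∏_{p ∣ m} (1 - 1/p) ≥ exp (-∑_{p ∣ m} 1/(p-1))`. Split the primes dividing `m` at
`y = ⌊log x⌋`: those up to `y` contribute at most `∑_{p ≤ y} 1/p + O(1) ≤ log log log x + O(1)`
by Mertens' second theorem, while at most `log m / log y` of them exceed `y`, each contributing
at most `1/y`, so `O(1)` in total. Hence `φ(m)/m ≫ 1/log log x` uniformly in `m ≤ x`.

Mertens' bound `∑_{p ≤ N} 1/p ≤ log log N + O(1)` follows by discrete partial summation from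
`∑_{p ≤ N} log p / p ≤ log N + log 4`, which comes from Legendre's formula for `N!` and
Chebyshev's `θ(N) ≤ N log 4`.
-/
open Filter Finset Real
open scoped Nat

lemma Nat.div_le_factorization_factorial {p : ℕ} (hp : p.Prime) (N : ℕ) :
    N / p ≤ (N !).factorization p := by
  rcases N.eq_zero_or_pos with rfl | hN
  · simp
  rw [Nat.factorization_factorial hp ((Nat.log_le_self p N).trans_lt N.lt_succ_self)]
  simpa using single_le_sum (s := Ico 1 (N + 1)) (f := fun i ↦ N / p ^ i)
    (fun _ _ ↦ Nat.zero_le _) (mem_Ico.2 ⟨le_rfl, by omega⟩)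

lemma sum_primesLE_div_mul_log_le (N : ℕ) :
    ∑ p ∈ Nat.primesLE N, ((N / p : ℕ) : ℝ) * log p ≤ N * log N :=
  calc ∑ p ∈ Nat.primesLE N, ((N / p : ℕ) : ℝ) * log p
      ≤ ∑ p ∈ Nat.primesLE N, ((N !).factorization p : ℝ) * log p := by
        gcongr with p hp
        exact Nat.div_le_factorization_factorial (Nat.prime_of_mem_primesLE hp) N
    _ ≤ ∑ p ∈ (N !).primeFactors, ((N !).factorization p : ℝ) * log p := by
        refine sum_le_sum_of_subset_of_nonneg (fun p hp ↦ ?_) fun p _ _ ↦ by positivity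
        obtain ⟨hpN, hp⟩ := Nat.mem_primesLE.1 hp
        exact Nat.mem_primeFactors.2 ⟨hp, hp.dvd_factorial.2 hpN, Nat.factorial_ne_zero N⟩
    _ = log (N ! : ℝ) := by
        rw [log_nat_eq_sum_factorization, Finsupp.sum, Nat.support_factorization]
    _ ≤ log ((N : ℝ) ^ N) := by
        gcongr
        exact_mod_cast Nat.factorial_le_pow N
    _ = N * log N := log_pow N N

theorem sum_primesLE_log_div_le (N : ℕ) :
    ∑ p ∈ Nat.primesLE N, log p / p ≤ log N + log 4 := by
  rcases N.eq_zero_or_pos with rfl | hN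
  · simp [Nat.primesLE_zero]; positivity
  have hN' : (0 : ℝ) < N := by exact_mod_cast hN
  suffices N * ∑ p ∈ Nat.primesLE N, log p / p ≤ N * (log N + log 4) from
    le_of_mul_le_mul_left this hN'
  calc N * ∑ p ∈ Nat.primesLE N, log p / p
      = ∑ p ∈ Nat.primesLE N, (N : ℝ) / p * log p := by
        rw [mul_sum]; exact sum_congr rfl fun _ _ ↦ by ring
    _ ≤ ∑ p ∈ Nat.primesLE N, (((N / p : ℕ) : ℝ) + 1) * log p := by
        gcongr with p
        rw [← Nat.floor_div_eq_div (K := ℝ)]; exact (Nat.lt_floor_add_one _).le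
    _ = ∑ p ∈ Nat.primesLE N, ((N / p : ℕ) : ℝ) * log p + Chebyshev.theta N := by
        rw [Chebyshev.theta_eq_sum_primesLE_log, ← sum_add_distrib]
        exact sum_congr rfl fun _ _ ↦ by ring
    _ ≤ N * log N + log 4 * N :=
        add_le_add (sum_primesLE_div_mul_log_le N) (Chebyshev.theta_le_log4_mul_x hN'.le)
    _ = N * (log N + log 4) := by ring

lemma sum_primesLE_succ_log_div_sub (n : ℕ) :
    ∑ p ∈ Nat.primesLE (n + 1), log p / p -
        log (n + 1 : ℕ) * ∑ p ∈ Nat.primesLE (n + 1), (p : ℝ)⁻¹ =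
      ∑ p ∈ Nat.primesLE n, log p / p - log (n + 1 : ℕ) * ∑ p ∈ Nat.primesLE n, (p : ℝ)⁻¹ := by
  rw [Nat.primesLE_succ]
  split_ifs
  · rw [sum_insert (Nat.notMem_primesLE n), sum_insert (Nat.notMem_primesLE n)]
    ring
  · rfl

/-- A potential for discrete partial summation: a new prime `n + 1` leaves
`∑_{p ≤ n} (log p - log (n + 1)) / p` unchanged, which together with
`∑_{p ≤ n} log p / p ≤ log n + log 4` makes the potential nonincreasing. -/
noncomputable def mertensPotential (n : ℕ) : ℝ :=
  ∑ p ∈ Nat.primesLE n, (p : ℝ)⁻¹ - (∑ p ∈ Nat.primesLE n, log p / p - log 4) / log n -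
    log (log n)

lemma mertensPotential_succ_le {n : ℕ} (hn : 2 ≤ n) :
    mertensPotential (n + 1) ≤ mertensPotential n := by
  have hshift := sum_primesLE_succ_log_div_sub n
  have hT := sum_primesLE_log_div_le n
  rw [mertensPotential, mertensPotential]
  set P' := ∑ p ∈ Nat.primesLE (n + 1), (p : ℝ)⁻¹
  set T' := ∑ p ∈ Nat.primesLE (n + 1), log p / p
  set P := ∑ p ∈ Nat.primesLE n, (p : ℝ)⁻¹
  set T := ∑ p ∈ Nat.primesLE n, log p / p
  set L := log (n : ℝ)
  set L' := log ((n + 1 : ℕ) : ℝ)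
  have hL : 0 < L := log_pos (by exact_mod_cast hn)
  have hLL' : L ≤ L' := log_le_log (by positivity) (by exact_mod_cast n.le_succ)
  have hL' : 0 < L' := hL.trans_le hLL'
  have hstep : P' - (T' - log 4) / L' = P - (T - log 4) / L' := by
    rw [eq_add_of_sub_eq' hshift]
    field_simp
    ring
  have hdiff : (T - log 4) * (L⁻¹ - L'⁻¹) ≤ L * (L⁻¹ - L'⁻¹) :=
    mul_le_mul_of_nonneg_right (by linarith) (sub_nonneg.2 (inv_anti₀ hL hLL'))
  have hlog : 1 - (L' / L)⁻¹ ≤ log L' - log L := by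
    rw [← log_div hL'.ne' hL.ne']
    exact one_sub_inv_le_log_of_pos (by positivity)
  have hcalc : L * (L⁻¹ - L'⁻¹) = 1 - (L' / L)⁻¹ := by field_simp
  have hexpand : (T - log 4) * (L⁻¹ - L'⁻¹) = (T - log 4) / L - (T - log 4) / L' := by ring
  linarith

theorem exists_sum_primesLE_inv_le :
    ∃ C, ∀ N ≥ 2, ∑ p ∈ Nat.primesLE N, (p : ℝ)⁻¹ ≤ log (log N) + C := by
  refine ⟨mertensPotential 2 + 1, fun N hN ↦ ?_⟩
  have hanti : mertensPotential N ≤ mertensPotential 2 :=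
    antitoneOn_nat_Ici_of_succ_le (fun _ ↦ mertensPotential_succ_le) (Set.mem_Ici.2 le_rfl) hN hN
  have hT : (∑ p ∈ Nat.primesLE N, log p / p - log 4) / log N ≤ 1 :=
    div_le_one_of_le₀ (by linarith [sum_primesLE_log_div_le N]) (log_natCast_nonneg N)
  rw [mertensPotential] at hanti
  linarith

lemma exp_neg_inv_sub_one_le {q : ℝ} (hq : 1 < q) : exp (-(q - 1)⁻¹) ≤ 1 - q⁻¹ := by
  have hx : 0 < 1 - q⁻¹ := sub_pos.2 (inv_lt_one_of_one_lt₀ hq)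
  rw [← le_log_iff_exp_le hx]
  convert one_sub_inv_le_log_of_pos hx using 1
  have : q - 1 ≠ 0 := by linarith
  field_simp
  ring

lemma exp_neg_sum_inv_sub_one_le_totient_div {m : ℕ} (hm : m ≠ 0) :
    exp (-∑ p ∈ m.primeFactors, ((p : ℝ) - 1)⁻¹) ≤ m.totient / m := by
  have hprod : (m.totient : ℝ) / m = ∏ p ∈ m.primeFactors, (1 - (p : ℝ)⁻¹) := by
    have h := congrArg (Rat.cast : ℚ → ℝ) (Nat.totient_eq_mul_prod_factors m)
    push_cast at h
    rw [h, mul_div_cancel_left₀ _ (by exact_mod_cast hm)]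
  rw [hprod, ← sum_neg_distrib, exp_sum]
  exact prod_le_prod (fun _ _ ↦ (exp_pos _).le) fun p hp ↦
    exp_neg_inv_sub_one_le (by exact_mod_cast (Nat.prime_of_mem_primeFactors hp).one_lt)

lemma sum_primesLE_inv_sub_one_le (y : ℕ) :
    ∑ p ∈ Nat.primesLE y, ((p : ℝ) - 1)⁻¹ ≤ ∑ p ∈ Nat.primesLE y, (p : ℝ)⁻¹ + 2 := by
  have hsq : ∑ p ∈ Nat.primesLE y, ((p : ℝ) ^ 2)⁻¹ ≤ 1 := by
    calc ∑ p ∈ Nat.primesLE y, ((p : ℝ) ^ 2)⁻¹ ≤ ∑ i ∈ Ioo 1 (y + 1), ((i : ℝ) ^ 2)⁻¹ := by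
          refine sum_le_sum_of_subset_of_nonneg (fun p hp ↦ ?_) fun _ _ _ ↦ by positivity
          obtain ⟨hpy, hp⟩ := Nat.mem_primesLE.1 hp
          exact mem_Ioo.2 ⟨hp.one_lt, by omega⟩
      _ ≤ 2 / ((1 : ℕ) + 1) := sum_Ioo_inv_sq_le 1 (y + 1)
      _ = 1 := by norm_num
  calc ∑ p ∈ Nat.primesLE y, ((p : ℝ) - 1)⁻¹
      ≤ ∑ p ∈ Nat.primesLE y, ((p : ℝ)⁻¹ + 2 * ((p : ℝ) ^ 2)⁻¹) := by
        refine sum_le_sum fun p hp ↦ ?_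
        have hp2 : (2 : ℝ) ≤ p := by exact_mod_cast Nat.two_le_of_mem_primesLE hp
        have hp1 : (0 : ℝ) < p - 1 := by linarith
        field_simp
        nlinarith
    _ ≤ ∑ p ∈ Nat.primesLE y, (p : ℝ)⁻¹ + 2 := by
        rw [sum_add_distrib, ← mul_sum]; linarith

lemma pow_card_primeFactors_filter_lt_le {m : ℕ} (hm : m ≠ 0) (y : ℕ) :
    y ^ #{p ∈ m.primeFactors | y < p} ≤ m :=
  (pow_card_le_prod _ _ _ fun _ hp ↦ (mem_filter.1 hp).2.le).trans <| Nat.le_of_dvd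
    (Nat.pos_of_ne_zero hm) ((prod_dvd_prod_of_subset _ _ _ (filter_subset _ _)).trans
      (Nat.prod_primeFactors_dvd m))

lemma sum_primeFactors_filter_lt_inv_sub_one_le {m y : ℕ} (hm : m ≠ 0) (hy : 2 ≤ y) :
    ∑ p ∈ m.primeFactors with y < p, ((p : ℝ) - 1)⁻¹ ≤ log m / (y * log y) := by
  have hy0 : (0 : ℝ) < y := by positivity
  have hlogy : 0 < log (y : ℝ) := log_pos (by exact_mod_cast hy)
  have hcard : #{p ∈ m.primeFactors | y < p} * log (y : ℝ) ≤ log m := by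
    rw [← log_pow]
    exact log_le_log (by positivity) (by exact_mod_cast pow_card_primeFactors_filter_lt_le hm y)
  calc ∑ p ∈ m.primeFactors with y < p, ((p : ℝ) - 1)⁻¹
      ≤ ∑ p ∈ m.primeFactors with y < p, (y : ℝ)⁻¹ := by
        refine sum_le_sum fun p hp ↦ inv_anti₀ hy0 ?_
        have : y + 1 ≤ p := (mem_filter.1 hp).2
        have : ((y + 1 : ℕ) : ℝ) ≤ p := by exact_mod_cast this
        push_cast at this; linarith
    _ = #{p ∈ m.primeFactors | y < p} * log y / (y * log y) := by
        rw [sum_const, nsmul_eq_mul]; field_simp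
    _ ≤ log m / (y * log y) := by gcongr

lemma sum_primeFactors_inv_sub_one_le {m y : ℕ} (hm : m ≠ 0) (hy : 2 ≤ y) :
    ∑ p ∈ m.primeFactors, ((p : ℝ) - 1)⁻¹ ≤
      ∑ p ∈ Nat.primesLE y, (p : ℝ)⁻¹ + 2 + log m / (y * log y) := by
  have hsmall : ∑ p ∈ m.primeFactors with ¬y < p, ((p : ℝ) - 1)⁻¹ ≤
      ∑ p ∈ Nat.primesLE y, ((p : ℝ) - 1)⁻¹ := by
    refine sum_le_sum_of_subset_of_nonneg (fun p hp ↦ ?_) fun p hp _ ↦ ?_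
    · obtain ⟨hp, hpy⟩ := mem_filter.1 hp
      exact Nat.mem_primesLE.2 ⟨not_lt.1 hpy, Nat.prime_of_mem_primeFactors hp⟩
    · have : (1 : ℝ) < p := by exact_mod_cast Nat.one_lt_of_mem_primesLE hp
      exact inv_nonneg.2 (by linarith)
  rw [← sum_filter_not_add_sum_filter _ (y < ·)]
  linarith [sum_primesLE_inv_sub_one_le y, sum_primeFactors_filter_lt_inv_sub_one_le hm hy]

theorem exists_sum_primeFactors_inv_sub_one_le :
    ∃ C, ∀ᶠ x : ℝ in atTop, ∀ m : ℕ, m ≠ 0 → (m : ℝ) ≤ x →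
      ∑ p ∈ m.primeFactors, ((p : ℝ) - 1)⁻¹ ≤ log (log (log x)) + C := by
  obtain ⟨C, hC⟩ := exists_sum_primesLE_inv_le
  refine ⟨C + 4, ?_⟩
  filter_upwards [tendsto_log_atTop.eventually_ge_atTop 4] with x hx m hm hmx
  set L := log x
  set y := ⌊L⌋₊
  have hy3 : 3 ≤ y := Nat.le_floor (by norm_num; linarith)
  have hy0 : (0 : ℝ) < y := by positivity
  have hyL : (y : ℝ) ≤ L := Nat.floor_le (by linarith)
  have hLy : L / 2 ≤ y := by linarith [Nat.sub_one_lt_floor L]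
  have hlogy : 1 ≤ log (y : ℝ) := by
    rw [le_log_iff_exp_le hy0]
    have : (3 : ℝ) ≤ y := by exact_mod_cast hy3
    linarith [exp_one_lt_d9]
  have hlogm : log m ≤ L := log_le_log (by positivity) hmx
  have hratio : log m / (y * log y) ≤ 2 := by
    rw [div_le_iff₀ (by positivity)]
    nlinarith
  have hloglog : log (log (y : ℝ)) ≤ log (log L) :=
    log_le_log (by linarith) (log_le_log hy0 hyL)
  linarith [sum_primeFactors_inv_sub_one_le hm (by omega : 2 ≤ y), hC y (by omega)]

theorem exists_totient_div_self_ge :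
    ∃ c > 0, ∀ᶠ x : ℝ in atTop, ∀ m : ℕ, m ≠ 0 → (m : ℝ) ≤ x →
      c / log (log x) ≤ m.totient / m := by
  obtain ⟨C, hC⟩ := exists_sum_primeFactors_inv_sub_one_le
  refine ⟨exp (-C), exp_pos _, ?_⟩
  filter_upwards [hC, (tendsto_log_atTop.comp tendsto_log_atTop).eventually_gt_atTop 0]
    with x hx (hlog : 0 < log (log x)) m hm hmx
  calc exp (-C) / log (log x) = exp (-(log (log (log x)) + C)) := by
        rw [neg_add, exp_add, exp_neg (log _), exp_log hlog, div_eq_inv_mul]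
    _ ≤ exp (-∑ p ∈ m.primeFactors, ((p : ℝ) - 1)⁻¹) := by gcongr; exact hx m hm hmx
    _ ≤ m.totient / m := exp_neg_sum_inv_sub_one_le_totient_div hm

namespace ArithmeticFunction

theorem carmichael_le (n : ℕ) : carmichael n ≤ n := by
  rcases n.eq_zero_or_pos with rfl | hn
  · simp
  exact (Nat.le_of_dvd (Nat.totient_pos.2 hn) (carmichael_dvd_totient n)).trans (Nat.totient_le n)

theorem carmichael_ne_zero {n : ℕ} (hn : n ≠ 0) : carmichael n ≠ 0 := by
  have : NeZero n := ⟨hn⟩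
  rw [carmichael_eq_exponent hn]
  exact Monoid.exponent_ne_zero_of_finite

end ArithmeticFunction

/-- `Σ_{n ≤ x} φ(λ(n))/λ(n) ≫ x / log log x`, where `λ` is the Carmichael
function (the exponent of `(ℤ/nℤ)ˣ`). -/
theorem sum_totient_carmichael_ratio_lower :
    ∃ c : ℝ, 0 < c ∧ ∀ᶠ x : ℝ in atTop,
      (∑ n ∈ Finset.Icc 1 ⌊x⌋₊,
          (Nat.totient (Monoid.exponent (ZMod n)ˣ) : ℝ) /
            (Monoid.exponent (ZMod n)ˣ : ℝ)) ≥
        c * x / Real.log (Real.log x) := by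
  obtain ⟨c, hc, htot⟩ := exists_totient_div_self_ge
  refine ⟨c / 2, by positivity, ?_⟩
  filter_upwards [htot, eventually_ge_atTop 2,
    (tendsto_log_atTop.comp tendsto_log_atTop).eventually_gt_atTop 0] with x hx hx2 hlog
  have hterm : ∀ n ∈ Icc 1 ⌊x⌋₊, c / log (log x) ≤
      (Nat.totient (Monoid.exponent (ZMod n)ˣ) : ℝ) / (Monoid.exponent (ZMod n)ˣ : ℝ) := by
    intro n hn
    obtain ⟨hn1, hnx⟩ := mem_Icc.1 hn
    rw [← ArithmeticFunction.carmichael_eq_exponent (by omega)]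
    refine hx _ (ArithmeticFunction.carmichael_ne_zero (by omega)) ?_
    calc (ArithmeticFunction.carmichael n : ℝ) ≤ ⌊x⌋₊ := by
          exact_mod_cast (ArithmeticFunction.carmichael_le n).trans hnx
      _ ≤ x := Nat.floor_le (by linarith)
  have hfloor : x / 2 ≤ ⌊x⌋₊ := by linarith [Nat.sub_one_lt_floor x]
  calc c / 2 * x / log (log x) = x / 2 * (c / log (log x)) := by ring
    _ ≤ ⌊x⌋₊ * (c / log (log x)) := by gcongr
    _ ≤ _ := by simpa using card_nsmul_le_sum _ _ _ hterm
end
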